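/- arXiv:1908.06112 — 6 statements merged into one kernel-verified Lean document; each statement's English description precedes it below -/
import Mathlib

section
/- For any probability vector p over K classes, the sum of the Reverse Cross Entropy losses over all K possible labels is constant: ∑_{k=1}^{K} ℓ_rce(p, k) = -(K - 1) · A. -/
open Finset

/-- Clipped logarithm: `L t = Real.log t` for `t > 0` and `L 0 = A`. -/
noncomputable def clog (A : ℝ) (t : ℝ) : ℝ := if t = 0 then A else Real.log t

/-- One-hot vector at label `y`. -/
def onehot {K : ℕ} (y : Fin K) : Fin K → ℝ := fun k => if k = y then 1 else 0

/-- Reverse Cross Entropy loss with clipping constant `A`. -/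
noncomputable def rce {K : ℕ} (A : ℝ) (p : Fin K → ℝ) (y : Fin K) : ℝ :=
  -∑ k, p k * clog A (onehot y k)

/-- For any probability vector `p` over `K` classes, the sum of the Reverse Cross Entropy
losses over all `K` possible labels is constant: `∑_{k=1}^{K} ℓ_rce(p, k) = -(K - 1) · A`. -/
theorem sum_rce_eq {K : ℕ} (hK : 2 ≤ K) (A : ℝ) (hA : A < 0)
    (p : Fin K → ℝ) (hp0 : ∀ k, 0 ≤ p k) (hp1 : ∑ k, p k = 1) :
    ∑ k, rce A p k = -((K : ℝ) - 1) * A := by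
  have key : ∀ y : Fin K, rce A p y = -(1 - p y) * A := by
    intro y
    unfold rce clog onehot
    have : ∀ k : Fin K, p k * (if (if k = y then (1:ℝ) else 0) = 0 then A else Real.log (if k = y then 1 else 0)) = p k * A - (if k = y then p k * A else 0) := by
      intro k
      by_cases h : k = y <;> simp [h]
    rw [Finset.sum_congr rfl fun k _ => this k, Finset.sum_sub_distrib,
      Finset.sum_ite_eq' _ y, ← Finset.sum_mul, hp1]
    simp
    ring
  rw [Finset.sum_congr rfl fun y _ => key y]
  rw [← Finset.sum_mul]
  have : ∑ y : Fin K, -(1 - p y) = -((K:ℝ) - 1) := by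
    rw [Finset.sum_neg_distrib, Finset.sum_sub_distrib, hp1]
    simp
  rw [this]
end

section
/- When the clipping constant is A = -2, the Reverse Cross Entropy loss coincides with the Mean Absolute Error loss: for every probability vector p over K classes and every label y, ℓ_rce(p, y) = ℓ_mae(p, y), i.e. -∑_k p k · L(q_y k) = ∑_k |p k - q_y k| where L uses L(0) = -2. -/
open Finset

/-- Mean Absolute Error loss between `p` and the one-hot vector at `y`. -/
def mae {K : ℕ} (p : Fin K → ℝ) (y : Fin K) : ℝ :=
  ∑ k, |p k - onehot y k|

/-- When the clipping constant is `A = -2`, the Reverse Cross Entropy loss coincides with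
the Mean Absolute Error loss: for every probability vector `p` over `K` classes and every
label `y`, `ℓ_rce(p, y) = ℓ_mae(p, y)`. -/
theorem rce_neg_two_eq_mae {K : ℕ} (hK : 2 ≤ K)
    (p : Fin K → ℝ) (hp0 : ∀ k, 0 ≤ p k) (hp1 : ∑ k, p k = 1) (y : Fin K) :
    rce (-2) p y = mae p y := by
  have hpy : p y ≤ 1 := by
    rw [← hp1]
    exact Finset.single_le_sum (fun k _ => hp0 k) (Finset.mem_univ y)
  unfold rce mae clog onehot
  have h1 : ∀ k : Fin K, p k * (if (if k = y then (1:ℝ) else 0) = 0 then (-2:ℝ)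
      else Real.log (if k = y then 1 else 0))
      = -2 * p k + (if k = y then 2 * p k else 0) := by
    intro k
    by_cases h : k = y <;> simp [h] <;> ring
  have h2 : ∀ k : Fin K, |p k - if k = y then (1:ℝ) else 0|
      = p k + (if k = y then 1 - 2 * p k else 0) := by
    intro k
    by_cases h : k = y
    · simp [h, abs_of_nonpos (by linarith : p y - 1 ≤ 0)]; ring
    · simp [h, abs_of_nonneg (hp0 k)]
  rw [Finset.sum_congr rfl (fun k _ => h1 k), Finset.sum_congr rfl (fun k _ => h2 k),
      Finset.sum_add_distrib, Finset.sum_add_distrib, Finset.sum_ite_eq',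
      Finset.sum_ite_eq', ← Finset.mul_sum, hp1]
  simp
  ring
end

section
/- Pointwise symmetric-noise identity: for any probability vector p over K classes, any true label y, and any noise rate η ∈ [0, 1), the expected RCE loss under symmetric label noise satisfies (1 - η) · ℓ_rce(p, y) + (η/(K-1)) · ∑_{k ≠ y} ℓ_rce(p, k) = (1 - ηK/(K-1)) · ℓ_rce(p, y) - A · η. -/
open Finset

/-- Pointwise symmetric-noise identity: for any probability vector `p` over `K` classes,
any true label `y`, and any noise rate `η ∈ [0, 1)`, the expected RCE loss under symmetric
label noise satisfies
`(1 - η) · ℓ_rce(p, y) + (η/(K-1)) · ∑_{k ≠ y} ℓ_rce(p, k)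
  = (1 - ηK/(K-1)) · ℓ_rce(p, y) - A · η`. -/
theorem symmetric_noise_pointwise {K : ℕ} (hK : 2 ≤ K) (A : ℝ) (hA : A < 0)
    (p : Fin K → ℝ) (hp0 : ∀ k, 0 ≤ p k) (hp1 : ∑ k, p k = 1) (y : Fin K)
    (η : ℝ) (hη0 : 0 ≤ η) (hη1 : η < 1) :
    (1 - η) * rce A p y + (η / ((K : ℝ) - 1)) * ∑ k ∈ univ \ {y}, rce A p k
      = (1 - η * K / ((K : ℝ) - 1)) * rce A p y - A * η := by
  have key : ∀ (z : Fin K), rce A p z = A * (p z - 1) := by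
    intro z
    have h1 : ∀ k ∈ (univ : Finset (Fin K)),
        p k * clog A (onehot z k) = A * p k - (if k = z then A * p k else 0) := by
      intro k _
      by_cases h : k = z <;> simp [clog, onehot, h, mul_comm]
    rw [rce, Finset.sum_congr rfl h1, Finset.sum_sub_distrib, ← Finset.mul_sum, hp1]
    simp
    ring
  have hpy : ∑ k ∈ univ \ {y}, p k = 1 - p y := by
    have := Finset.sum_sdiff_eq_sub (Finset.singleton_subset_iff.mpr (Finset.mem_univ y))
      (f := p)
    simpa [hp1] using this
  have hcard : ((univ \ {y} : Finset (Fin K)).card : ℝ) = (K : ℝ) - 1 := by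
    rw [Finset.card_sdiff_of_subset (by simp)]
    simp
    have : 1 ≤ K := by omega
    push_cast [this]
    ring
  have hsum : ∑ k ∈ univ \ {y}, rce A p k = A * ((1 - p y) - ((K : ℝ) - 1)) := by
    calc ∑ k ∈ univ \ {y}, rce A p k = ∑ k ∈ univ \ {y}, (A * p k - A) := by
          apply Finset.sum_congr rfl; intro k _; rw [key]; ring
      _ = A * (1 - p y) - ((K : ℝ) - 1) * A := by
          rw [Finset.sum_sub_distrib, ← Finset.mul_sum, hpy, Finset.sum_const,
            nsmul_eq_mul, hcard]
      _ = A * ((1 - p y) - ((K : ℝ) - 1)) := by ring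
  have hK1 : (K : ℝ) - 1 ≠ 0 := by
    have : (2 : ℝ) ≤ K := by exact_mod_cast hK
    linarith
  rw [key, hsum]
  field_simp
  ring
end

section
/- Symmetric-noise risk identity: for any classifier f and any noise rate η ∈ [0, 1), the noisy risk satisfies R^η(f) = (1 - ηK/(K-1)) · R(f) - A · η. -/
/-! Only the zero entries of a one-hot vector see the clipped logarithm, so on a probability
vector `ℓ_rce(p, y) = -A (1 - p y)`, and the losses of the `K - 1` wrong labels add up to
`-A (K - 2 + p y)`, which is affine in `ℓ_rce(p, y)`. The identity therefore holds pointwise,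
and integrates against the probability measure because the loss is bounded by `|A|`. -/

open Finset MeasureTheory

/-- `p` is a probability vector. -/
def IsProbVec {K : ℕ} (p : Fin K → ℝ) : Prop := (∀ k, 0 ≤ p k) ∧ ∑ k, p k = 1

/-- A classifier: pointwise a probability vector, coordinatewise measurable. -/
def IsClassifier {𝒳 : Type*} [MeasurableSpace 𝒳] {K : ℕ} (f : 𝒳 → Fin K → ℝ) : Prop :=
  (∀ x, IsProbVec (f x)) ∧ ∀ k : Fin K, Measurable fun xy : 𝒳 × Fin K => f xy.1 k

/-- Clean RCE risk `R(f) = ∫ ℓ_rce(f x, y) dμ(x, y)`. -/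
noncomputable def cleanRisk {𝒳 : Type*} [MeasurableSpace 𝒳] {K : ℕ} (A : ℝ)
    (μ : Measure (𝒳 × Fin K)) (f : 𝒳 → Fin K → ℝ) : ℝ :=
  ∫ xy, rce A (f xy.1) xy.2 ∂μ

/-- Noisy RCE risk under symmetric label noise with rate `η`. -/
noncomputable def symNoisyRisk {𝒳 : Type*} [MeasurableSpace 𝒳] {K : ℕ} (A : ℝ)
    (μ : Measure (𝒳 × Fin K)) (η : ℝ) (f : 𝒳 → Fin K → ℝ) : ℝ :=
  ∫ xy, ((1 - η) * rce A (f xy.1) xy.2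
      + (η / ((K : ℝ) - 1)) * ∑ k ∈ univ \ {xy.2}, rce A (f xy.1) k) ∂μ

lemma rce_eq_of_sum_eq_one {K : ℕ} (A : ℝ) {p : Fin K → ℝ} (hp : ∑ k, p k = 1) (y : Fin K) :
    rce A p y = -A * (1 - p y) := by
  have hterm : ∀ k, p k * clog A (onehot y k) = p k * A - if k = y then p k * A else 0 := by
    intro k
    by_cases h : k = y <;> simp [onehot, clog, h]
  simp only [rce, hterm, sum_sub_distrib, sum_ite_eq', mem_univ, if_true, ← sum_mul, hp]
  ring

lemma sum_compl_rce_eq_of_sum_eq_one {K : ℕ} (A : ℝ) {p : Fin K → ℝ} (hp : ∑ k, p k = 1)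
    (y : Fin K) : ∑ k ∈ univ \ {y}, rce A p k = -A * ((K : ℝ) - 2 + p y) := by
  have hcompl : ∑ k ∈ univ \ {y}, p k = 1 - p y := by
    rw [← hp, ← sum_sdiff (subset_univ {y}), sum_singleton, add_sub_cancel_right]
  have hcard : ((univ \ {y}).card : ℝ) = K - 1 := by
    rw [card_sdiff_of_subset (subset_univ _), card_univ, Fintype.card_fin, card_singleton,
      Nat.cast_pred (Fin.pos y)]
  simp only [rce_eq_of_sum_eq_one A hp, ← mul_sum, sum_sub_distrib, sum_const, nsmul_eq_mul,
    mul_one, hcompl, hcard]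
  ring

lemma IsProbVec.abs_rce_le {K : ℕ} (A : ℝ) {p : Fin K → ℝ} (hp : IsProbVec p) (y : Fin K) :
    |rce A p y| ≤ |A| := by
  have hle : p y ≤ 1 := hp.2 ▸ single_le_sum (fun k _ => hp.1 k) (mem_univ y)
  rw [rce_eq_of_sum_eq_one A hp.2, abs_mul, abs_neg, abs_of_nonneg (sub_nonneg.2 hle)]
  exact mul_le_of_le_one_right (abs_nonneg A) (by linarith [hp.1 y])

lemma IsClassifier.integrable_rce {𝒳 : Type*} [MeasurableSpace 𝒳] {K : ℕ} (A : ℝ)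
    (μ : Measure (𝒳 × Fin K)) [IsFiniteMeasure μ] {f : 𝒳 → Fin K → ℝ} (hf : IsClassifier f) :
    Integrable (fun xy => rce A (f xy.1) xy.2) μ := by
  have hmeas : Measurable fun xy : 𝒳 × Fin K => rce A (f xy.1) xy.2 :=
    (Finset.measurable_sum univ fun k _ =>
      (hf.2 k).mul ((measurable_of_countable (clog A <| onehot · k)).comp measurable_snd)).neg
  exact .of_bound hmeas.aestronglyMeasurable |A|
    (ae_of_all _ fun xy => (hf.1 xy.1).abs_rce_le A xy.2)

lemma symNoisy_integrand_eq {K : ℕ} (hK : (K : ℝ) ≠ 1) (A : ℝ) {p : Fin K → ℝ}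
    (hp : ∑ k, p k = 1) (η : ℝ) (y : Fin K) :
    (1 - η) * rce A p y + η / ((K : ℝ) - 1) * ∑ k ∈ univ \ {y}, rce A p k
      = (1 - η * K / ((K : ℝ) - 1)) * rce A p y - A * η := by
  have hK1 : (K : ℝ) - 1 ≠ 0 := sub_ne_zero.2 hK
  rw [rce_eq_of_sum_eq_one A hp, sum_compl_rce_eq_of_sum_eq_one A hp]
  field_simp
  ring

theorem symNoisyRisk_eq_general {𝒳 : Type*} [MeasurableSpace 𝒳] {K : ℕ} (hK : 2 ≤ K)
    (A : ℝ) (μ : Measure (𝒳 × Fin K)) [IsProbabilityMeasure μ]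
    (f : 𝒳 → Fin K → ℝ) (hf : IsClassifier f)
    (η : ℝ) :
    symNoisyRisk A μ η f = (1 - η * K / ((K : ℝ) - 1)) * cleanRisk A μ f - A * η := by
  have hK1 : (K : ℝ) ≠ 1 := by
    norm_cast
    omega
  calc symNoisyRisk A μ η f
      = ∫ xy, ((1 - η * K / ((K : ℝ) - 1)) * rce A (f xy.1) xy.2 - A * η) ∂μ :=
        integral_congr_ae (ae_of_all _ fun xy => symNoisy_integrand_eq hK1 A (hf.1 xy.1).2 η xy.2)
    _ = (1 - η * K / ((K : ℝ) - 1)) * cleanRisk A μ f - A * η := by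
        rw [integral_sub ((hf.integrable_rce A μ).const_mul _) (integrable_const _),
          integral_const_mul, integral_const, probReal_univ, one_smul, cleanRisk]

/-- Symmetric-noise risk identity: for any classifier `f` and any noise rate `η ∈ [0, 1)`,
the noisy risk satisfies `R^η(f) = (1 - ηK/(K-1)) · R(f) - A · η`. -/
theorem symNoisyRisk_eq {𝒳 : Type*} [MeasurableSpace 𝒳] {K : ℕ} (hK : 2 ≤ K)
    (A : ℝ) (hA : A < 0) (μ : Measure (𝒳 × Fin K)) [IsProbabilityMeasure μ]
    (f : 𝒳 → Fin K → ℝ) (hf : IsClassifier f)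
    (η : ℝ) (hη0 : 0 ≤ η) (hη1 : η < 1) :
    symNoisyRisk A μ η f = (1 - η * K / ((K : ℝ) - 1)) * cleanRisk A μ f - A * η :=
  symNoisyRisk_eq_general hK A μ f hf η
end

section
/- Asymmetric-noise risk decomposition: for class-dependent noise rates η_{y k} with η_y = ∑_{k ≠ y} η_{y k}, and any classifier f, the asymmetric-noise risk satisfies R^η(f) = -(K-1) · A · ∫ (1 - η_y) dμ(x, y) - ∫ ∑_{k ≠ y} (1 - η_y - η_{y k}) · ℓ_rce(f x, k) dμ(x, y). -/
open Finset MeasureTheory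

/-- Total noise rate of class `y`: `η_y = ∑_{k ≠ y} η_{y k}`. -/
def etaRow {K : ℕ} (η : Fin K → Fin K → ℝ) (y : Fin K) : ℝ :=
  ∑ k ∈ univ \ {y}, η y k

/-- Noisy RCE risk under class-dependent (asymmetric) label noise with rates `η_{y k}`. -/
noncomputable def asymNoisyRisk {𝒳 : Type*} [MeasurableSpace 𝒳] {K : ℕ} (A : ℝ)
    (μ : Measure (𝒳 × Fin K)) (η : Fin K → Fin K → ℝ) (f : 𝒳 → Fin K → ℝ) : ℝ :=
  ∫ xy, ((1 - etaRow η xy.2) * rce A (f xy.1) xy.2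
      + ∑ k ∈ univ \ {xy.2}, η xy.2 k * rce A (f xy.1) k) ∂μ

lemma clog_onehot (A : ℝ) {K : ℕ} (y k : Fin K) :
    clog A (onehot y k) = if k = y then 0 else A := by
  unfold clog onehot
  split_ifs with h <;> simp_all

lemma rce_eq (A : ℝ) {K : ℕ} {p : Fin K → ℝ} (hp : ∑ k, p k = 1) (y : Fin K) :
    rce A p y = -A * (1 - p y) := by
  unfold rce
  have h : ∀ k, p k * clog A (onehot y k) = p k * A - (if k = y then p k * A else 0) := by
    intro k; rw [clog_onehot]; split_ifs <;> ring
  simp only [h, Finset.sum_sub_distrib, ← Finset.sum_mul, hp, Finset.sum_ite_eq' Finset.univ,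
    Finset.mem_univ, if_true]
  ring

lemma sum_rce (A : ℝ) {K : ℕ} {p : Fin K → ℝ} (hp : ∑ k, p k = 1) (y : Fin K) :
    ∑ k ∈ univ \ {y}, rce A p k = -A * ((K : ℝ) - 1) - rce A p y := by
  have h1 : ∑ k, rce A p k = -A * ((K : ℝ) - 1) := by
    simp only [rce_eq A hp]
    rw [← Finset.mul_sum, Finset.sum_sub_distrib]
    simp [hp, Finset.card_univ]
  have h2 : ∑ k ∈ univ \ {y}, rce A p k = (∑ k, rce A p k) - ∑ k ∈ ({y} : Finset (Fin K)), rce A p k :=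
    Finset.sum_sdiff_eq_sub (Finset.subset_univ _)
  rw [h2, h1, Finset.sum_singleton]

lemma pointwise_decomp (A : ℝ) {K : ℕ} {p : Fin K → ℝ} (hp : ∑ k, p k = 1)
    (η : Fin K → Fin K → ℝ) (y : Fin K) :
    (1 - etaRow η y) * rce A p y + ∑ k ∈ univ \ {y}, η y k * rce A p k
      = -((K : ℝ) - 1) * A * (1 - etaRow η y)
        - ∑ k ∈ univ \ {y}, (1 - etaRow η y - η y k) * rce A p k := by
  have h : ∑ k ∈ univ \ {y}, (1 - etaRow η y - η y k) * rce A p k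
      = (1 - etaRow η y) * (∑ k ∈ univ \ {y}, rce A p k)
        - ∑ k ∈ univ \ {y}, η y k * rce A p k := by
    rw [Finset.mul_sum, ← Finset.sum_sub_distrib]
    exact Finset.sum_congr rfl fun k _ => by ring
  rw [h, sum_rce A hp]
  ring

/-- Asymmetric-noise risk decomposition: for class-dependent noise rates `η_{y k}` with
`η_y = ∑_{k ≠ y} η_{y k}`, and any classifier `f`, the asymmetric-noise risk satisfies
`R^η(f) = -(K-1) · A · ∫ (1 - η_y) dμ(x, y)
  - ∫ ∑_{k ≠ y} (1 - η_y - η_{y k}) · ℓ_rce(f x, k) dμ(x, y)`. -/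
theorem asymNoisyRisk_decomposition {𝒳 : Type*} [MeasurableSpace 𝒳] {K : ℕ} (hK : 2 ≤ K)
    (A : ℝ) (hA : A < 0) (μ : Measure (𝒳 × Fin K)) [IsProbabilityMeasure μ]
    (η : Fin K → Fin K → ℝ) (hη0 : ∀ y k, y ≠ k → 0 ≤ η y k)
    (hη1 : ∀ y, etaRow η y ≤ 1)
    (f : 𝒳 → Fin K → ℝ) (hf : IsClassifier f) :
    asymNoisyRisk A μ η f
      = -((K : ℝ) - 1) * A * (∫ xy, (1 - etaRow η xy.2) ∂μ)
        - ∫ xy, ∑ k ∈ univ \ {xy.2},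
            (1 - etaRow η xy.2 - η xy.2 k) * rce A (f xy.1) k ∂μ := by
  set g : 𝒳 × Fin K → ℝ := fun xy =>
    ∑ k ∈ univ \ {xy.2}, (1 - etaRow η xy.2 - η xy.2 k) * rce A (f xy.1) k with hg
  set h : 𝒳 × Fin K → ℝ := fun xy => 1 - etaRow η xy.2 with hh
  -- basic facts
  have hsum1 : ∀ x, ∑ k, f x k = 1 := fun x => (hf.1 x).2
  have hp0 : ∀ x k, 0 ≤ f x k := fun x k => (hf.1 x).1 k
  have hp1 : ∀ x k, f x k ≤ 1 := by
    intro x k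
    calc f x k ≤ ∑ j, f x j := Finset.single_le_sum (fun j _ => hp0 x j) (Finset.mem_univ k)
    _ = 1 := hsum1 x
  have he0 : ∀ y, 0 ≤ etaRow η y := by
    intro y
    refine Finset.sum_nonneg fun k hk => hη0 y k ?_
    have := (Finset.mem_sdiff.1 hk).2
    simp only [Finset.mem_singleton] at this
    exact fun e => this e.symm
  have hηle : ∀ y k, k ∈ univ \ {y} → η y k ≤ etaRow η y := by
    intro y k hk
    refine Finset.single_le_sum (fun j hj => hη0 y j ?_) hk
    have := (Finset.mem_sdiff.1 hj).2
    simp only [Finset.mem_singleton] at this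
    exact fun e => this e.symm
  have hη0' : ∀ y k, k ∈ univ \ {y} → 0 ≤ η y k := by
    intro y k hk
    refine hη0 y k ?_
    have := (Finset.mem_sdiff.1 hk).2
    simp only [Finset.mem_singleton] at this
    exact fun e => this e.symm
  have hrabs : ∀ x k, |rce A (f x) k| ≤ |A| := by
    intro x k
    rw [rce_eq A (hsum1 x), abs_mul, abs_neg]
    have h1 : |1 - f x k| ≤ 1 := by
      rw [abs_le]; constructor <;> nlinarith [hp0 x k, hp1 x k]
    nlinarith [abs_nonneg A]
  -- measurability
  have hrmeas : ∀ k : Fin K, Measurable fun xy : 𝒳 × Fin K => rce A (f xy.1) k := by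
    intro k
    unfold rce
    exact (Finset.measurable_sum _ fun j _ => (hf.2 j).mul measurable_const).neg
  have hhmeas : Measurable h := by
    exact ((measurable_of_countable fun y => 1 - etaRow η y).comp measurable_snd)
  have hgmeas : Measurable g := by
    have heq : g = fun xy => ∑ y : Fin K, if xy.2 = y then
        (∑ k ∈ univ \ {y}, (1 - etaRow η y - η y k) * rce A (f xy.1) k) else 0 := by
      funext xy
      rw [Finset.sum_ite_eq]
      simp [hg]
    rw [heq]
    refine Finset.measurable_sum _ fun y _ => Measurable.ite ?_ ?_ measurable_const
    · exact measurable_snd (measurableSet_singleton y)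
    · exact Finset.measurable_sum _ fun k _ => (measurable_const.mul (hrmeas k))
  -- integrability
  have hhint : Integrable h μ := by
    refine Integrable.mono' (integrable_const 1) hhmeas.aestronglyMeasurable
      (Filter.Eventually.of_forall fun xy => ?_)
    simp only [hh, Real.norm_eq_abs]
    rw [abs_le]
    constructor
    · linarith [hη1 xy.2]
    · linarith [he0 xy.2]
  have hgint : Integrable g μ := by
    refine Integrable.mono' (integrable_const ((K : ℝ) * |A|)) hgmeas.aestronglyMeasurable
      (Filter.Eventually.of_forall fun xy => ?_)
    simp only [hg, Real.norm_eq_abs]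
    calc |∑ k ∈ univ \ {xy.2}, (1 - etaRow η xy.2 - η xy.2 k) * rce A (f xy.1) k|
        ≤ ∑ k ∈ univ \ {xy.2}, |(1 - etaRow η xy.2 - η xy.2 k) * rce A (f xy.1) k| :=
          Finset.abs_sum_le_sum_abs _ _
      _ ≤ ∑ _k ∈ univ \ {xy.2}, |A| := by
          refine Finset.sum_le_sum fun k hk => ?_
          rw [abs_mul]
          have hc : |1 - etaRow η xy.2 - η xy.2 k| ≤ 1 := by
            rw [abs_le]
            constructor
            · linarith [hη1 xy.2, hηle xy.2 k hk, hη0' xy.2 k hk, he0 xy.2]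
            · linarith [he0 xy.2, hη0' xy.2 k hk]
          nlinarith [hrabs xy.1 k, abs_nonneg (rce A (f xy.1) k), abs_nonneg A]
      _ = ((univ \ {xy.2}).card : ℝ) * |A| := by rw [Finset.sum_const, nsmul_eq_mul]
      _ ≤ (K : ℝ) * |A| := by
          refine mul_le_mul_of_nonneg_right ?_ (abs_nonneg A)
          have : (univ \ {xy.2}).card ≤ K := by
            calc (univ \ {xy.2}).card ≤ (univ : Finset (Fin K)).card :=
              Finset.card_le_card (Finset.sdiff_subset)
            _ = K := by simp
          exact_mod_cast this
  -- pointwise rewrite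
  have heq : (fun xy : 𝒳 × Fin K => (1 - etaRow η xy.2) * rce A (f xy.1) xy.2
      + ∑ k ∈ univ \ {xy.2}, η xy.2 k * rce A (f xy.1) k)
      = fun xy => (-((K : ℝ) - 1) * A) * h xy - g xy := by
    funext xy
    exact pointwise_decomp A (hsum1 xy.1) η xy.2
  unfold asymNoisyRisk
  rw [heq, integral_sub (hhint.const_mul _) hgint, integral_const_mul]
end

section
/- Gradient of the Symmetric cross entropy Loss with α = β = 1: for a one-hot label y and clipping constant A < 0, the loss ℓ_sl(z) = -log p_y(z) - A · (1 - p_y(z)) of the softmax probabilities satisfies ∂ℓ_sl/∂z_j = (p_j(z) - 1) - (A · p_j(z)² - A · p_j(z)) when j = y, and ∂ℓ_sl/∂z_j = p_j(z) - A · p_j(z) · p_y(z) when j ≠ y. -/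
/-!
Along a curve `f`, the softmax probabilities move by `p_k' = p_k (f'_k - ⟨p, f'⟩)` (quotient rule
applied to `exp (f_k) / ∑ exp (f_i)`), and `ℓ_sl = -log p_y - A (1 - p_y)` then moves by
`(A p_y - 1)(f'_y - ⟨p, f'⟩)`. The partial derivative in `z_j` is the case `f = update z j`,
`f' = Pi.single j 1`, where `⟨p, f'⟩ = p_j`.
-/

open Finset

/-- Softmax probabilities: `p_k(z) = exp(z k) / ∑_j exp(z j)`. -/
noncomputable def softmax {K : ℕ} (z : Fin K → ℝ) (k : Fin K) : ℝ :=
  Real.exp (z k) / ∑ j, Real.exp (z j)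

/-- Cross entropy loss of the softmax probabilities with one-hot target at `y`. -/
noncomputable def ceLoss {K : ℕ} (y : Fin K) (z : Fin K → ℝ) : ℝ :=
  -Real.log (softmax z y)

/-- Reverse Cross Entropy loss of the softmax probabilities with one-hot target at `y`
and clipping constant `A`: `ℓ_rce(z) = -A · (1 - p_y(z))`. -/
noncomputable def rceLoss {K : ℕ} (A : ℝ) (y : Fin K) (z : Fin K → ℝ) : ℝ :=
  -A * (1 - softmax z y)

/-- Symmetric cross entropy Loss with weights `α = β = 1`. -/
noncomputable def slLoss {K : ℕ} (A : ℝ) (y : Fin K) (z : Fin K → ℝ) : ℝ :=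
  ceLoss y z + rceLoss A y z

theorem softmax_pos {K : ℕ} (z : Fin K → ℝ) (k : Fin K) : 0 < softmax z k :=
  div_pos (Real.exp_pos _) (sum_pos (fun _ _ => Real.exp_pos _) ⟨k, mem_univ k⟩)

section Curve

variable {K : ℕ} {f : ℝ → Fin K → ℝ} {f' : Fin K → ℝ} {x : ℝ}

theorem hasDerivAt_softmax_comp (hf : HasDerivAt f f' x) (k : Fin K) :
    HasDerivAt (fun t => softmax (f t) k)
      (softmax (f x) k * (f' k - ∑ i, softmax (f x) i * f' i)) x := by
  have hexp (i : Fin K) : HasDerivAt (fun t => Real.exp (f t i)) (Real.exp (f x i) * f' i) x :=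
    (hasDerivAt_pi.1 hf i).exp
  have hS : 0 < ∑ i, Real.exp (f x i) := sum_pos (fun _ _ => Real.exp_pos _) ⟨k, mem_univ k⟩
  refine ((hexp k).fun_div (HasDerivAt.fun_sum fun i _ => hexp i) hS.ne').congr_deriv ?_
  simp only [softmax, ← sum_div, div_mul_eq_mul_div]
  field_simp

theorem hasDerivAt_slLoss_comp (hf : HasDerivAt f f' x) (A : ℝ) (y : Fin K) :
    HasDerivAt (fun t => slLoss A y (f t))
      ((A * softmax (f x) y - 1) * (f' y - ∑ i, softmax (f x) i * f' i)) x := by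
  have hp := hasDerivAt_softmax_comp hf y
  refine ((hp.log (softmax_pos _ _).ne').neg.add ((hp.const_sub 1).const_mul (-A))).congr_deriv ?_
  field_simp [(softmax_pos (f x) y).ne']
  ring

end Curve

theorem slLoss_hasDerivAt_general {K : ℕ} (A : ℝ)
    (z : Fin K → ℝ) (y j : Fin K) :
    (j = y →
      HasDerivAt (fun t => slLoss A y (Function.update z j t))
        ((softmax z j - 1) - (A * (softmax z j) ^ 2 - A * softmax z j)) (z j))
    ∧ (j ≠ y →
      HasDerivAt (fun t => slLoss A y (Function.update z j t))
        (softmax z j - A * softmax z j * softmax z y) (z j)) := by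
  have hd := hasDerivAt_slLoss_comp (hasDerivAt_update z j (z j)) A y
  simp only [Function.update_eq_self, Pi.single_apply, mul_ite, mul_one, mul_zero,
    sum_ite_eq', mem_univ, if_true] at hd
  refine ⟨fun hjy => ?_, fun hjy => ?_⟩
  · subst hjy
    rw [if_pos rfl] at hd
    exact hd.congr_deriv (by ring)
  · rw [if_neg (Ne.symm hjy)] at hd
    exact hd.congr_deriv (by ring)

/-- Gradient of the Symmetric cross entropy Loss with `α = β = 1`: for a one-hot label
`y` and clipping constant `A < 0`, the loss `ℓ_sl(z) = -log p_y(z) - A · (1 - p_y(z))`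
satisfies `∂ℓ_sl/∂z_j = (p_j(z) - 1) - (A · p_j(z)² - A · p_j(z))` when `j = y`, and
`∂ℓ_sl/∂z_j = p_j(z) - A · p_j(z) · p_y(z)` when `j ≠ y`. -/
theorem slLoss_hasDerivAt {K : ℕ} (hK : 2 ≤ K) (A : ℝ) (hA : A < 0)
    (z : Fin K → ℝ) (y j : Fin K) :
    (j = y →
      HasDerivAt (fun t => slLoss A y (Function.update z j t))
        ((softmax z j - 1) - (A * (softmax z j) ^ 2 - A * softmax z j)) (z j))
    ∧ (j ≠ y →
      HasDerivAt (fun t => slLoss A y (Function.update z j t))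
        (softmax z j - A * softmax z j * softmax z y) (z j)) :=
  slLoss_hasDerivAt_general A z y j
end
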